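/- Every equivalence class of ∼ on φ-rows contains a unique minimal φ-row, namely the row whose maximal factorization A₀^{m₀}⋯A_n^{m_n} satisfies m_i ∈ [1, rank(A_i) + 1] for all i; and its length is at most (n+1)·(maxrank + 1) where n + 1 ≤ |REQ| + |AP| + 1 and maxrank ≤ |REQ|, hence at most (|REQ| + |AP| + 1)·(|REQ| + 1). -/

import Mathlib

structure Atom (α β : Type) where
  req : Finset α
  prop : Finset β
deriving DecidableEq

def rank {α β : Type} (REQ : Finset α) (A : Atom α β) : ℕ :=
  REQ.card - A.req.card

/-- A φ-row in maximal factorization form: positive multiplicities, atoms over (REQ, AP),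
adjacent block atoms distinct with requests increasing and propositions decreasing. -/
def PhiFact {α β : Type} (REQ : Finset α) (AP : Finset β) (l : List (Atom α β × ℕ)) : Prop :=
  (∀ b ∈ l, 0 < b.2 ∧ b.1.req ⊆ REQ ∧ b.1.prop ⊆ AP) ∧
  List.Chain' (fun b b' => b.1 ≠ b'.1 ∧ b.1.req ⊆ b'.1.req ∧ b'.1.prop ⊆ b.1.prop) l

def BlockEquiv {α β : Type} (REQ : Finset α) (b b' : Atom α β × ℕ) : Prop :=
  b.1 = b'.1 ∧ (b.2 = b'.2 ∨ (rank REQ b.1 < b.2 ∧ rank REQ b.1 < b'.2))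

def RowEquiv {α β : Type} (REQ : Finset α) (r r' : List (Atom α β × ℕ)) : Prop :=
  List.Forall₂ (BlockEquiv REQ) r r'

/-!
Truncating every multiplicity `m` of a block atom `A` to `min m (rank A + 1)` keeps the atoms, hence
the φ-row shape, and stays in the `∼`-class; two rows with all multiplicities at most `rank + 1`
are `∼`-equivalent only if equal, since `∼` identifies only multiplicities above the rank. For the
length bound, the adjacent atoms of a φ-row strictly increase in `|Req| + (|AP| - |Prop|)`, a
quantity at most `|REQ| + |AP|`, so a row has at most `|REQ| + |AP| + 1` blocks.
-/

theorem List.length_le_of_isChain_lt {l : List ℕ} {N : ℕ} (h : l.IsChain (· < ·))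
    (hN : ∀ x ∈ l, x ≤ N) : l.length ≤ N + 1 := by
  have hnd : l.Nodup := (List.isChain_iff_pairwise.mp h).imp ne_of_lt
  simpa using (List.subperm_of_subset hnd
    fun x hx => List.mem_range.2 (Nat.lt_succ_of_le (hN x hx))).length_le

theorem List.Forall₂.eq_right_of_unique_on {γ δ : Type*} {R : γ → δ → Prop} {P : δ → Prop}
    (hR : ∀ a b b', R a b → R a b' → P b → P b' → b = b') :
    ∀ {l m m'}, Forall₂ R l m → Forall₂ R l m' → (∀ b ∈ m, P b) → (∀ b ∈ m', P b) → m = m'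
  | _, _, _, .nil, .nil, _, _ => rfl
  | _, _, _, .cons h t, .cons h' t', hm, hm' => by
    simp only [List.forall_mem_cons] at hm hm'
    rw [hR _ _ _ h h' hm.1 hm'.1, t.eq_right_of_unique_on hR t' hm.2 hm'.2]

section

variable {α β : Type} {REQ : Finset α} {AP : Finset β}

theorem Atom.card_req_lt_or_card_prop_lt {A A' : Atom α β} (hne : A ≠ A')
    (hreq : A.req ⊆ A'.req) (hprop : A'.prop ⊆ A.prop) :
    A.req.card < A'.req.card ∨ A'.prop.card < A.prop.card := by
  by_contra! h
  apply hne
  cases A; cases A'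
  simp only [Atom.mk.injEq]
  exact ⟨Finset.eq_of_subset_of_card_le hreq h.1, (Finset.eq_of_subset_of_card_le hprop h.2).symm⟩

theorem PhiFact.length_le {l : List (Atom α β × ℕ)} (h : PhiFact REQ AP l) :
    l.length ≤ REQ.card + AP.card + 1 := by
  obtain ⟨hmem, hchain⟩ := h
  let height : Atom α β × ℕ → ℕ := fun b => b.1.req.card + (AP.card - b.1.prop.card)
  have hinc : (l.map height).IsChain (· < ·) := by
    refine (List.isChain_map height).2 (hchain.imp_of_mem_imp fun b b' hb _ ⟨hne, hreq, hprop⟩ => ?_)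
    have := Finset.card_le_card (hmem b hb).2.2
    have := Finset.card_le_card hreq
    have := Finset.card_le_card hprop
    have := Atom.card_req_lt_or_card_prop_lt hne hreq hprop
    simp only [height]
    omega
  have hbound : ∀ x ∈ l.map height, x ≤ REQ.card + AP.card := by
    simp only [List.forall_mem_map]
    intro b hb
    have := Finset.card_le_card (hmem b hb).2.1
    simp only [height]
    omega
  simpa using List.length_le_of_isChain_lt hinc hbound

theorem PhiFact.sum_snd_le {m : List (Atom α β × ℕ)} (h : PhiFact REQ AP m)
    (hmin : ∀ b ∈ m, b.2 ≤ rank REQ b.1 + 1) :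
    (m.map Prod.snd).sum ≤ (REQ.card + AP.card + 1) * (REQ.card + 1) := by
  have hle : ∀ x ∈ m.map Prod.snd, x ≤ REQ.card + 1 := by
    simp only [List.forall_mem_map]
    exact fun b hb => (hmin b hb).trans (Nat.succ_le_succ (Nat.sub_le _ _))
  calc (m.map Prod.snd).sum ≤ m.length * (REQ.card + 1) := by
        simpa using List.sum_le_card_nsmul _ _ hle
    _ ≤ (REQ.card + AP.card + 1) * (REQ.card + 1) := Nat.mul_le_mul_right _ h.length_le

def truncBlock (REQ : Finset α) (b : Atom α β × ℕ) : Atom α β × ℕ :=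
  (b.1, min b.2 (rank REQ b.1 + 1))

theorem snd_le_of_mem_map_truncBlock {r : List (Atom α β × ℕ)} :
    ∀ b ∈ r.map (truncBlock REQ), b.2 ≤ rank REQ b.1 + 1 := by
  simp only [List.forall_mem_map]
  exact fun _ _ => min_le_right _ _

theorem blockEquiv_truncBlock (b : Atom α β × ℕ) : BlockEquiv REQ b (truncBlock REQ b) := by
  refine ⟨rfl, ?_⟩
  simp only [truncBlock]
  omega

theorem PhiFact.map_truncBlock {r : List (Atom α β × ℕ)} (h : PhiFact REQ AP r) :
    PhiFact REQ AP (r.map (truncBlock REQ)) := by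
  obtain ⟨hmem, hchain⟩ := h
  refine ⟨?_, List.isChain_map_of_isChain (truncBlock REQ) (fun _ _ hab => hab) hchain⟩
  simp only [List.forall_mem_map]
  intro b hb
  obtain ⟨hpos, hreq, hprop⟩ := hmem b hb
  exact ⟨lt_min hpos (Nat.succ_pos _), hreq, hprop⟩

theorem rowEquiv_map_truncBlock (r : List (Atom α β × ℕ)) :
    RowEquiv REQ r (r.map (truncBlock REQ)) :=
  List.forall₂_map_right_iff.2 (List.forall₂_same.2 fun b _ => blockEquiv_truncBlock b)

theorem BlockEquiv.eq_of_snd_le {b c c' : Atom α β × ℕ} (h : BlockEquiv REQ b c)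
    (h' : BlockEquiv REQ b c') (hc : c.2 ≤ rank REQ c.1 + 1) (hc' : c'.2 ≤ rank REQ c'.1 + 1) :
    c = c' := by
  obtain ⟨hfst, hsnd⟩ := h
  obtain ⟨hfst', hsnd'⟩ := h'
  rw [← hfst] at hc
  rw [← hfst'] at hc'
  exact Prod.ext (hfst.symm.trans hfst') (by omega)

theorem RowEquiv.eq_of_snd_le {r m m' : List (Atom α β × ℕ)} (h : RowEquiv REQ r m)
    (h' : RowEquiv REQ r m') (hm : ∀ b ∈ m, b.2 ≤ rank REQ b.1 + 1)
    (hm' : ∀ b ∈ m', b.2 ≤ rank REQ b.1 + 1) : m = m' :=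
  List.Forall₂.eq_right_of_unique_on (fun _ _ _ => BlockEquiv.eq_of_snd_le) h h' hm hm'

end

/-- Every equivalence class contains a unique minimal φ-row (all multiplicities in
[1, rank + 1]), whose total length is at most (|REQ| + |AP| + 1)·(|REQ| + 1). -/
theorem unique_minimal_row {α β : Type} (REQ : Finset α) (AP : Finset β)
    (r : List (Atom α β × ℕ)) (hr : PhiFact REQ AP r) :
    ∃! m : List (Atom α β × ℕ),
      PhiFact REQ AP m ∧ (∀ b ∈ m, b.2 ≤ rank REQ b.1 + 1) ∧ RowEquiv REQ r m ∧
      (m.map Prod.snd).sum ≤ (REQ.card + AP.card + 1) * (REQ.card + 1) := by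
  refine ⟨r.map (truncBlock REQ), ⟨hr.map_truncBlock, snd_le_of_mem_map_truncBlock,
    rowEquiv_map_truncBlock r, hr.map_truncBlock.sum_snd_le snd_le_of_mem_map_truncBlock⟩, ?_⟩
  rintro m ⟨-, hm, hrm, -⟩
  exact hrm.eq_of_snd_le (rowEquiv_map_truncBlock r) hm snd_le_of_mem_map_truncBlock
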